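/- In the CIBC system, suppose at time t the agents C_α = {α_1 < α_2 < ⋯ < α_J} all share one opinion, the agents C_β = {β_1 < β_2 < ⋯ < β_K} all share another opinion, α_1 < β_1, and the two clusters have a connection, i.e., ‖x_{α_1}(t) − x_{β_1}(t)‖ ≤ max_{k ∈ C_α ∪ C_β} r_k. Let A_{α,β} := {(i,j) : i,j ∈ C_α ∪ C_β, i ≠ j}, and define S := max{⌈(‖x_{α_1}(t) − x_{β_1}(t)‖ / min{r_{α_J}, r_{β_K}} − 1) · 4J(K+1)/(J+K+1) + 2⌉, 0} and T := max{⌈log₂(‖x_{α_1}(t) − x_{β_1}(t)‖ / min{r_{α_J}, r_{β_K}})⌉, 0}. Then there exist an integer t* with 0 < t* ≤ S(T+1) + 1 and edge sets E'_t, E'_{t+1}, …, E'_{t+t*−1} ⊆ A_{α,β} such that under the resulting dynamics all agents in C_α ∪ C_β have the same opinion at time t + t*. -/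

import Mathlib

open Finset MeasureTheory ProbabilityTheory Metric

noncomputable section

open scoped Classical

/-- The neighbor set of agent `i`. -/
def nbr {n d : ℕ} (r : Fin n → ℝ) (E : Finset (Fin n × Fin n))
    (x : Fin n → EuclideanSpace ℝ (Fin d)) (i : Fin n) : Finset (Fin n) :=
  Finset.univ.filter (fun j => j ≠ i ∧ (i, j) ∈ E ∧ ‖x i - x j‖ ≤ r i)

/-- One step of the bounded-confidence dynamics. -/
def step {n d : ℕ} (r : Fin n → ℝ) (E : Finset (Fin n × Fin n))
    (x : Fin n → EuclideanSpace ℝ (Fin d)) : Fin n → EuclideanSpace ℝ (Fin d) :=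
  fun i => ((1 : ℝ) + (nbr r E x i).card)⁻¹ • (x i + ∑ j ∈ nbr r E x i, x j)

/-- The trajectory of the bounded-confidence dynamics driven by edge sets `E`. -/
def traj {n d : ℕ} (r : Fin n → ℝ) (E : ℕ → Finset (Fin n × Fin n))
    (x0 : Fin n → EuclideanSpace ℝ (Fin d)) : ℕ → Fin n → EuclideanSpace ℝ (Fin d)
  | 0 => x0
  | t + 1 => step r (E t) (traj r E x0 t)

instance (α : Type*) : MeasurableSpace (Finset α) := ⊤

section Aux
variable {n d : ℕ} (r : Fin n → ℝ)

lemma traj_congr (E E' : ℕ → Finset (Fin n × Fin n)) (x0 : Fin n → EuclideanSpace ℝ (Fin d))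
    (t : ℕ) (h : ∀ s, s < t → E' s = E s) : traj r E' x0 t = traj r E x0 t := by
  induction t with
  | zero => rfl
  | succ t ih =>
    show step r (E' t) _ = step r (E t) _
    rw [h t (Nat.lt_succ_self t), ih (fun s hs => h s (hs.trans (Nat.lt_succ_self t)))]

lemma step_eq_self (E : Finset (Fin n × Fin n)) (X : Fin n → EuclideanSpace ℝ (Fin d))
    (i : Fin n) (h : ∀ j, (i, j) ∉ E) : step r E X i = X i := by
  have hnbr : nbr r E X i = ∅ := by
    ext j; simp [nbr, h j]
  simp [step, hnbr]

lemma step_single (i₀ j₀ : Fin n) (hne : j₀ ≠ i₀) (X : Fin n → EuclideanSpace ℝ (Fin d))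
    (hle : ‖X i₀ - X j₀‖ ≤ r i₀) :
    step r {(i₀, j₀)} X i₀ = (2:ℝ)⁻¹ • (X i₀ + X j₀) := by
  have hnbr : nbr r ({(i₀, j₀)} : Finset (Fin n × Fin n)) X i₀ = {j₀} := by
    ext j
    simp only [nbr, Finset.mem_filter, Finset.mem_univ, true_and, Finset.mem_singleton,
      Prod.mk.injEq]
    constructor
    · intro hj; exact hj.2.1
    · rintro rfl; exact ⟨hne, rfl, hle⟩
  rw [step, hnbr]
  norm_num

lemma step_single_other (i₀ j₀ : Fin n) (X : Fin n → EuclideanSpace ℝ (Fin d))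
    (i : Fin n) (hi : i ≠ i₀) : step r {(i₀, j₀)} X i = X i := by
  apply step_eq_self
  intro j hj
  simp only [Finset.mem_singleton, Prod.mk.injEq] at hj
  exact hi hj.1

lemma step_clique (V : Finset (Fin n)) (X : Fin n → EuclideanSpace ℝ (Fin d))
    (i : Fin n) (hi : i ∈ V) (h : ∀ j ∈ V, ‖X i - X j‖ ≤ r i) :
    step r V.offDiag X i = (V.card : ℝ)⁻¹ • ∑ j ∈ V, X j := by
  have hnbr : nbr r V.offDiag X i = V.erase i := by
    ext j
    simp only [nbr, Finset.mem_filter, Finset.mem_univ, true_and, Finset.mem_erase,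
      Finset.mem_offDiag]
    constructor
    · rintro ⟨h1, ⟨-, h2, -⟩, -⟩; exact ⟨h1, h2⟩
    · rintro ⟨h1, h2⟩; exact ⟨h1, ⟨hi, h2, Ne.symm h1⟩, h j h2⟩
  have hc1 : 1 ≤ V.card := Finset.card_pos.mpr ⟨i, hi⟩
  have hcast : (1:ℝ) + ((V.erase i).card : ℝ) = (V.card : ℝ) := by
    rw [Finset.card_erase_of_mem hi]
    rw [Nat.cast_sub hc1]
    ring
  rw [step, hnbr, hcast, Finset.sum_erase_eq_sub hi]
  congr 1
  abel

lemma step_clique_other (V : Finset (Fin n)) (X : Fin n → EuclideanSpace ℝ (Fin d))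
    (i : Fin n) (hi : i ∉ V) : step r V.offDiag X i = X i := by
  apply step_eq_self
  intro j hj
  exact hi (Finset.mem_offDiag.mp hj).1

end Aux

section Main
variable {n d : ℕ}

lemma pt_dist (a w : EuclideanSpace ℝ (Fin d)) (hw : ‖w‖ = 1) (u v : ℝ) :
    ‖(a + u • w) - (a + v • w)‖ = |u - v| := by
  have h : (a + u • w) - (a + v • w) = (u - v) • w := by
    rw [sub_smul]; abel
  rw [h, norm_smul, hw, mul_one, Real.norm_eq_abs]

lemma half_pt (a w : EuclideanSpace ℝ (Fin d)) (u v : ℝ) :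
    (2:ℝ)⁻¹ • ((a + u • w) + (a + v • w)) = a + ((u + v)/2) • w := by
  have : (a + u • w) + (a + v • w) = (2:ℝ) • a + (u + v) • w := by
    rw [add_smul, two_smul]; abel
  rw [this, smul_add, smul_smul, smul_smul]
  norm_num
  congr 1
  ring

lemma avg_pt (a w : EuclideanSpace ℝ (Fin d)) (c q : ℝ) (K : ℕ)
    (X : Fin n → EuclideanSpace ℝ (Fin d)) (A1 : Fin n) (Q : Finset (Fin n))
    (hA1 : A1 ∉ Q) (hK : Q.card = K)
    (hXA : X A1 = a + c • w) (hXQ : ∀ j ∈ Q, X j = a + q • w) :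
    (((K:ℝ) + 1))⁻¹ • ∑ j ∈ insert A1 Q, X j
      = a + ((c + K * q)/((K:ℝ)+1)) • w := by
  have hsum : ∑ j ∈ insert A1 Q, X j = ((K:ℝ)+1) • a + (c + K * q) • w := by
    rw [Finset.sum_insert hA1, hXA, Finset.sum_congr rfl hXQ, Finset.sum_const, hK]
    have : (K : ℕ) • (a + q • w) = (K:ℝ) • a + ((K:ℝ) * q) • w := by
      simp [smul_add, mul_smul, Nat.cast_smul_eq_nsmul]
    rw [this, add_smul, add_smul, one_smul]
    abel
  have hK0 : ((K:ℝ) + 1) ≠ 0 := by positivity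
  rw [hsum, smul_add, smul_smul, smul_smul, inv_mul_cancel₀ hK0, one_smul]
  congr 2
  exact inv_mul_eq_div _ _

variable (r : Fin n → ℝ) (x0 : Fin n → EuclideanSpace ℝ (Fin d))
  (a w : EuclideanSpace ℝ (Fin d))

lemma shuttle_run (hw : ‖w‖ = 1) (A1 j₀ : Fin n) (hne : j₀ ≠ A1) (δ : ℝ) (hδr : δ ≤ r A1)
    (t₀ : ℕ) (E₀ : ℕ → Finset (Fin n × Fin n)) (p q : ℝ) (hgap : |p - q| ≤ δ)
    (hA1 : traj r E₀ x0 t₀ A1 = a + p • w)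
    (hj₀ : traj r E₀ x0 t₀ j₀ = a + q • w) (k : ℕ) :
    traj r (fun s => if s < t₀ then E₀ s else {(A1, j₀)}) x0 (t₀ + k) A1
      = a + (q + (p - q) * (2⁻¹:ℝ) ^ k) • w ∧
    ∀ i, i ≠ A1 → traj r (fun s => if s < t₀ then E₀ s else {(A1, j₀)}) x0 (t₀ + k) i
      = traj r E₀ x0 t₀ i := by
  set E₁ : ℕ → Finset (Fin n × Fin n) := fun s => if s < t₀ then E₀ s else {(A1, j₀)} with hE₁
  have hbase : traj r E₁ x0 t₀ = traj r E₀ x0 t₀ :=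
    traj_congr r E₀ E₁ x0 t₀ (fun s hs => by simp [hE₁, hs])
  induction k with
  | zero =>
    constructor
    · rw [Nat.add_zero, hbase, hA1, pow_zero, mul_one, show q + (p - q) = p by ring]
    · intro i _; rw [Nat.add_zero, hbase]
  | succ k ih =>
    obtain ⟨ihA, ihO⟩ := ih
    have hEk : E₁ (t₀ + k) = {(A1, j₀)} := by simp [hE₁]
    have hstep : traj r E₁ x0 (t₀ + (k+1)) = step r (E₁ (t₀+k)) (traj r E₁ x0 (t₀+k)) := by
      rw [show t₀ + (k+1) = (t₀ + k) + 1 by ring]; rfl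
    have hXj : traj r E₁ x0 (t₀+k) j₀ = a + q • w := by rw [ihO j₀ hne, hj₀]
    set ck : ℝ := q + (p - q) * (2⁻¹:ℝ) ^ k with hck
    have hnorm : ‖traj r E₁ x0 (t₀+k) A1 - traj r E₁ x0 (t₀+k) j₀‖ ≤ r A1 := by
      rw [ihA, hXj, pt_dist a w hw]
      have h1 : |ck - q| = |p - q| * (2⁻¹:ℝ)^k := by
        rw [hck, show q + (p - q) * (2⁻¹:ℝ) ^ k - q = (p - q) * (2⁻¹:ℝ)^k by ring,
          abs_mul, abs_of_nonneg (by positivity : (0:ℝ) ≤ (2⁻¹:ℝ)^k)]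
      have h2 : |p - q| * (2⁻¹:ℝ)^k ≤ |p - q| * 1 := by
        apply mul_le_mul_of_nonneg_left _ (abs_nonneg _)
        exact pow_le_one₀ (by norm_num) (by norm_num)
      rw [h1]
      linarith
    constructor
    · rw [hstep, hEk, step_single r A1 j₀ hne _ hnorm, ihA, hXj, half_pt]
      congr 2
      rw [hck]; ring
    · intro i hi
      rw [hstep, hEk, step_single_other r A1 j₀ _ i hi, ihO i hi]
end Main

section HalfRound
variable {n d : ℕ} (r : Fin n → ℝ) (x0 : Fin n → EuclideanSpace ℝ (Fin d))
  (a w : EuclideanSpace ℝ (Fin d))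

set_option maxHeartbeats 1000000 in
lemma halfround (hw : ‖w‖ = 1) (U : Finset (Fin n)) (A1 : Fin n) (hA1U : A1 ∈ U)
    (m δ : ℝ) (hm0 : 0 < m) (hδr : δ ≤ r A1) (hmr : ∀ i ∈ U, m ≤ r i)
    (Tn : ℕ) (hTn : δ ≤ m * 2 ^ Tn)
    (t₀ : ℕ) (E₀ : ℕ → Finset (Fin n × Fin n)) (P Q : Finset (Fin n))
    (hPQ : P ∪ Q = U) (hdisj : Disjoint P Q) (hA1P : A1 ∈ P) (hQ : Q.Nonempty)
    (p q : ℝ) (hgap : |p - q| ≤ δ) (hgapm : m < |p - q|)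
    (hXP : ∀ i ∈ P, traj r E₀ x0 t₀ i = a + p • w)
    (hXQ : ∀ i ∈ Q, traj r E₀ x0 t₀ i = a + q • w) :
    ∃ c : ℕ, 0 < c ∧ c ≤ Tn + 1 ∧ ∃ (E' : ℕ → Finset (Fin n × Fin n)) (q' : ℝ),
      (∀ s, s < t₀ → E' s = E₀ s) ∧
      (∀ s, t₀ ≤ s → s < t₀ + c → E' s ⊆ U.offDiag) ∧
      |p - q'| ≤ |p - q| - m / (2 * ((Q.card : ℝ) + 1)) ∧
      (∀ i ∈ P.erase A1, traj r E' x0 (t₀ + c) i = a + p • w) ∧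
      (∀ i ∈ insert A1 Q, traj r E' x0 (t₀ + c) i = a + q' • w) := by
  obtain ⟨j₀, hj₀Q⟩ := hQ
  have hPU : P ⊆ U := hPQ ▸ Finset.subset_union_left
  have hQU : Q ⊆ U := hPQ ▸ Finset.subset_union_right
  have hj₀U : j₀ ∈ U := hQU hj₀Q
  have hA1Q : A1 ∉ Q := Finset.disjoint_left.mp hdisj hA1P
  have hne : j₀ ≠ A1 := fun h => hA1Q (h ▸ hj₀Q)
  -- number of halvings
  have hex : ∃ s : ℕ, |p - q| ≤ m * 2 ^ s := ⟨Tn, hgap.trans hTn⟩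
  set sh := Nat.find hex with hsh
  have hsh_spec : |p - q| ≤ m * 2 ^ sh := Nat.find_spec hex
  have hshTn : sh ≤ Tn := Nat.find_min' hex (hgap.trans hTn)
  have hsh0 : sh ≠ 0 := by
    intro h
    rw [h] at hsh_spec
    simp at hsh_spec
    linarith
  have hprev : ¬ |p - q| ≤ m * 2 ^ (sh - 1) := Nat.find_min hex (by omega)
  clear_value sh
  push_neg at hprev
  set e : ℝ := (2⁻¹ : ℝ) ^ sh with he
  have he_eq : e = ((2:ℝ) ^ sh)⁻¹ := by rw [he, inv_pow]
  have he_pos : 0 < e := by positivity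
  have he_le1 : e ≤ 1 := pow_le_one₀ (by norm_num) (by norm_num)
  have h2pos : (0:ℝ) < (2:ℝ) ^ sh := by positivity
  have hKpos0 : (0:ℝ) < (Q.card : ℝ) + 1 := by positivity
  have hq2 : (2:ℝ) ^ sh = 2 * (2:ℝ) ^ (sh - 1) := by
    conv_lhs => rw [show sh = (sh - 1) + 1 from by omega]
    rw [pow_succ]; ring
  have hsub_le : |p - q| * e ≤ m := by
    rw [he_eq, ← div_eq_mul_inv]
    exact (div_le_iff₀ h2pos).mpr (by linarith)
  have hsub_gt : m / 2 < |p - q| * e := by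
    have h1 : m * (2:ℝ) ^ (sh - 1) < |p - q| := hprev
    rw [he_eq, hq2, ← div_eq_mul_inv,
      lt_div_iff₀ (by positivity : (0:ℝ) < 2 * (2:ℝ)^(sh-1))]
    nlinarith [h1]
  -- the shuttle phase
  set E₁ : ℕ → Finset (Fin n × Fin n) := fun s => if s < t₀ then E₀ s else {(A1, j₀)} with hE₁
  obtain ⟨hshA, hshO⟩ := shuttle_run r x0 a w hw A1 j₀ hne δ hδr t₀ E₀ p q hgap
    (hXP A1 hA1P) (hXQ j₀ hj₀Q) sh
  rw [← he] at hshA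
  set cc : ℝ := q + (p - q) * e with hcc
  -- merge phase
  set V : Finset (Fin n) := insert A1 Q with hV
  have hVU : V ⊆ U := Finset.insert_subset hA1U hQU
  set E₂ : ℕ → Finset (Fin n × Fin n) := fun s => if s < t₀ + sh then E₁ s else V.offDiag
    with hE₂
  have hbase2 : traj r E₂ x0 (t₀ + sh) = traj r E₁ x0 (t₀ + sh) :=
    traj_congr r E₁ E₂ x0 (t₀ + sh) (fun s hs => by simp [hE₂, hs])
  have hXA1 : traj r E₂ x0 (t₀ + sh) A1 = a + cc • w := by rw [hbase2]; exact hshA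
  have hXQ2 : ∀ j ∈ Q, traj r E₂ x0 (t₀ + sh) j = a + q • w := by
    intro j hj
    rw [hbase2, hshO j (fun h => hA1Q (h ▸ hj)), hXQ j hj]
  have hXPe : ∀ i ∈ P.erase A1, traj r E₂ x0 (t₀ + sh) i = a + p • w := by
    intro i hi
    obtain ⟨hi1, hi2⟩ := Finset.mem_erase.mp hi
    rw [hbase2, hshO i hi1, hXP i hi2]
  have hccq : |cc - q| ≤ m := by
    rw [hcc, show q + (p - q) * e - q = (p - q) * e by ring, abs_mul, abs_of_pos he_pos]
    exact hsub_le
  have hnormV : ∀ i ∈ V, ∀ j ∈ V,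
      ‖traj r E₂ x0 (t₀ + sh) i - traj r E₂ x0 (t₀ + sh) j‖ ≤ r i := by
    intro i hi j hj
    have hmi : m ≤ r i := hmr i (hVU hi)
    have hcoord : ∀ k ∈ V, ∃ u : ℝ, traj r E₂ x0 (t₀ + sh) k = a + u • w ∧ (u = cc ∨ u = q) := by
      intro k hk
      rcases Finset.mem_insert.mp hk with rfl | hk
      · exact ⟨cc, hXA1, Or.inl rfl⟩
      · exact ⟨q, hXQ2 k hk, Or.inr rfl⟩
    obtain ⟨u, hu, hu'⟩ := hcoord i hi
    obtain ⟨v, hv, hv'⟩ := hcoord j hj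
    rw [hu, hv, pt_dist a w hw]
    rcases hu' with rfl | rfl <;> rcases hv' with rfl | rfl
    · simp only [sub_self, abs_zero]; linarith
    · exact le_trans hccq hmi
    · rw [abs_sub_comm]; exact le_trans hccq hmi
    · simp only [sub_self, abs_zero]; linarith
  have hstep2 : ∀ i, traj r E₂ x0 (t₀ + (sh + 1)) i
      = step r (E₂ (t₀ + sh)) (traj r E₂ x0 (t₀ + sh)) i := by
    intro i; rw [show t₀ + (sh + 1) = (t₀ + sh) + 1 by ring]; rfl
  have hE2top : E₂ (t₀ + sh) = V.offDiag := by simp [hE₂]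
  set K : ℕ := Q.card with hK
  set q' : ℝ := (cc + K * q) / ((K : ℝ) + 1) with hq'
  have hVcard : (V.card : ℝ) = (K : ℝ) + 1 := by
    rw [hV, Finset.card_insert_of_notMem hA1Q]; push_cast; ring
  have hmerge : ∀ i ∈ V, traj r E₂ x0 (t₀ + (sh + 1)) i = a + q' • w := by
    intro i hi
    rw [hstep2 i, hE2top, step_clique r V _ i hi (hnormV i hi), hVcard,
      avg_pt a w cc q K _ A1 Q hA1Q rfl hXA1 hXQ2]
  have hkeep : ∀ i ∈ P.erase A1, traj r E₂ x0 (t₀ + (sh + 1)) i = a + p • w := by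
    intro i hi
    obtain ⟨hi1, hi2⟩ := Finset.mem_erase.mp hi
    have hiV : i ∉ V := by
      rw [hV, Finset.mem_insert]
      push_neg
      exact ⟨hi1, Finset.disjoint_left.mp hdisj hi2⟩
    rw [hstep2 i, hE2top, step_clique_other r V _ i hiV, hXPe i hi]
  have hKpos : (0:ℝ) < (K : ℝ) + 1 := by positivity
  have hgapq' : |p - q'| ≤ |p - q| - m / (2 * ((K : ℝ) + 1)) := by
    have hfac : q' - p = (q - p) * (((K : ℝ) + 1 - e) / ((K : ℝ) + 1)) := by
      rw [hq', hcc]; field_simp; ring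
    have hfacpos : 0 ≤ ((K : ℝ) + 1 - e) / ((K : ℝ) + 1) := by
      apply div_nonneg _ hKpos.le
      have := Nat.cast_nonneg (α := ℝ) K
      linarith
    have habs : |p - q'| = |p - q| * (((K : ℝ) + 1 - e) / ((K : ℝ) + 1)) := by
      rw [abs_sub_comm, hfac, abs_mul, abs_of_nonneg hfacpos, abs_sub_comm]
    have hsplit : |p - q| * (((K : ℝ) + 1 - e) / ((K : ℝ) + 1))
        = |p - q| - |p - q| * e / ((K : ℝ) + 1) := by
      field_simp
    have hkey : m / (2 * ((K : ℝ) + 1)) ≤ |p - q| * e / ((K : ℝ) + 1) := by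
      rw [div_le_div_iff₀ (by positivity) hKpos]
      nlinarith [hsub_gt]
    rw [habs, hsplit]
    linarith
  refine ⟨sh + 1, Nat.succ_pos _, by omega, E₂, q', ?_, ?_, hgapq', hkeep, hmerge⟩
  · intro s hs
    have h1 : s < t₀ + sh := lt_of_lt_of_le hs (Nat.le_add_right t₀ sh)
    simp [hE₂, hE₁, hs, h1]
  · intro s hs1 hs2
    by_cases h : s < t₀ + sh
    · have hEs : E₂ s = {(A1, j₀)} := by simp [hE₂, hE₁, h, not_lt.mpr hs1]
      rw [hEs, Finset.singleton_subset_iff, Finset.mem_offDiag]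
      exact ⟨hA1U, hj₀U, Ne.symm hne⟩
    · have hEs : E₂ s = V.offDiag := by simp [hE₂, h]
      rw [hEs]
      intro x hx
      rw [Finset.mem_offDiag] at hx ⊢
      exact ⟨hVU hx.1, hVU hx.2.1, hx.2.2⟩

end HalfRound

section Rounds
variable {n d : ℕ} (r : Fin n → ℝ) (x0 : Fin n → EuclideanSpace ℝ (Fin d))
  (a w : EuclideanSpace ℝ (Fin d))

lemma finalmerge (hw : ‖w‖ = 1) (U : Finset (Fin n)) (m : ℝ)
    (hmr : ∀ i ∈ U, m ≤ r i)
    (t₀ : ℕ) (E₀ : ℕ → Finset (Fin n × Fin n)) (P Q : Finset (Fin n))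
    (hPQ : P ∪ Q = U)
    (p q : ℝ) (hgap : |p - q| ≤ m)
    (hXP : ∀ i ∈ P, traj r E₀ x0 t₀ i = a + p • w)
    (hXQ : ∀ i ∈ Q, traj r E₀ x0 t₀ i = a + q • w) :
    ∃ E' : ℕ → Finset (Fin n × Fin n),
      (∀ s, s < t₀ → E' s = E₀ s) ∧
      (∀ s, t₀ ≤ s → s < t₀ + 1 → E' s ⊆ U.offDiag) ∧
      ∃ ξ, ∀ i ∈ U, traj r E' x0 (t₀ + 1) i = ξ := by
  set E' : ℕ → Finset (Fin n × Fin n) := fun s => if s < t₀ then E₀ s else U.offDiag with hE'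
  have hbase : traj r E' x0 t₀ = traj r E₀ x0 t₀ :=
    traj_congr r E₀ E' x0 t₀ (fun s hs => by simp [hE', hs])
  have hcoord : ∀ k ∈ U, ∃ u, traj r E' x0 t₀ k = a + u • w ∧ (u = p ∨ u = q) := by
    intro k hk
    rcases Finset.mem_union.mp (hPQ ▸ hk) with h | h
    · exact ⟨p, by rw [hbase, hXP k h], Or.inl rfl⟩
    · exact ⟨q, by rw [hbase, hXQ k h], Or.inr rfl⟩
  have h0 : 0 ≤ m := le_trans (abs_nonneg _) hgap
  have hnorm : ∀ i ∈ U, ∀ j ∈ U, ‖traj r E' x0 t₀ i - traj r E' x0 t₀ j‖ ≤ r i := by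
    intro i hi j hj
    obtain ⟨u, hu, hu'⟩ := hcoord i hi
    obtain ⟨v, hv, hv'⟩ := hcoord j hj
    have hmi := hmr i hi
    rw [hu, hv, pt_dist a w hw]
    rcases hu' with rfl | rfl <;> rcases hv' with rfl | rfl
    · simp only [sub_self, abs_zero]; linarith
    · linarith
    · rw [abs_sub_comm]; linarith
    · simp only [sub_self, abs_zero]; linarith
  refine ⟨E', fun s hs => by simp [hE', hs], ?_,
    (U.card : ℝ)⁻¹ • ∑ j ∈ U, traj r E' x0 t₀ j, ?_⟩
  · intro s hs1 _
    have hEs : E' s = U.offDiag := by simp [hE', not_lt.mpr hs1]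
    rw [hEs]
  · intro i hi
    have hst : traj r E' x0 (t₀ + 1) i = step r (E' t₀) (traj r E' x0 t₀) i := rfl
    rw [hst, show E' t₀ = U.offDiag by simp [hE'], step_clique r U _ i hi (hnorm i hi)]

lemma rounds (hw : ‖w‖ = 1) (U : Finset (Fin n)) (A1 : Fin n) (hA1U : A1 ∈ U)
    (m δ : ℝ) (hm0 : 0 < m) (hδr : δ ≤ r A1) (hmr : ∀ i ∈ U, m ≤ r i)
    (Tn : ℕ) (hTn : δ ≤ m * 2 ^ Tn)
    (P Q : Finset (Fin n)) (hPQ : P ∪ Q = U) (hdisj : Disjoint P Q)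
    (hA1P : A1 ∈ P) (hQ : Q.Nonempty) :
    ∀ N : ℕ, ∀ t₀ : ℕ, ∀ E₀ : ℕ → Finset (Fin n × Fin n), ∀ p q : ℝ,
      |p - q| ≤ δ →
      |p - q| ≤ m + N * (m / (2 * ((Q.card : ℝ) + 1)) + m / (2 * (P.card : ℝ))) →
      (∀ i ∈ P, traj r E₀ x0 t₀ i = a + p • w) →
      (∀ i ∈ Q, traj r E₀ x0 t₀ i = a + q • w) →
      ∃ tstar : ℕ, 0 < tstar ∧ tstar ≤ 2 * N * (Tn + 1) + 1 ∧
        ∃ E' : ℕ → Finset (Fin n × Fin n),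
          (∀ s, s < t₀ → E' s = E₀ s) ∧
          (∀ s, t₀ ≤ s → s < t₀ + tstar → E' s ⊆ U.offDiag) ∧
          ∃ ξ, ∀ i ∈ U, traj r E' x0 (t₀ + tstar) i = ξ := by
  have hQA1 : A1 ∉ Q := Finset.disjoint_left.mp hdisj hA1P
  have hPU : P ⊆ U := hPQ ▸ Finset.subset_union_left
  have hQU : Q ⊆ U := hPQ ▸ Finset.subset_union_right
  have hUnion2 : (insert A1 Q) ∪ (P.erase A1) = U := by
    ext i
    simp only [Finset.mem_union, Finset.mem_insert, Finset.mem_erase]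
    constructor
    · rintro ((rfl | h) | ⟨h1, h2⟩)
      · exact hA1U
      · exact hQU h
      · exact hPU h2
    · intro hi
      rcases Finset.mem_union.mp (hPQ ▸ hi) with h | h
      · by_cases hA : i = A1
        · exact Or.inl (Or.inl hA)
        · exact Or.inr ⟨hA, h⟩
      · exact Or.inl (Or.inr h)
  have hdisj2 : Disjoint (insert A1 Q) (P.erase A1) := by
    rw [Finset.disjoint_left]
    intro x hx hx'
    obtain ⟨hx1, hx2⟩ := Finset.mem_erase.mp hx'
    rcases Finset.mem_insert.mp hx with rfl | hxQ
    · exact hx1 rfl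
    · exact Finset.disjoint_right.mp hdisj hxQ hx2
  have hPcard : 0 < P.card := Finset.card_pos.mpr ⟨A1, hA1P⟩
  have hPcR : (0:ℝ) < (P.card : ℝ) := by exact_mod_cast hPcard
  have hpos1 : 0 < m / (2 * ((Q.card : ℝ) + 1)) := by positivity
  have hpos2 : 0 < m / (2 * (P.card : ℝ)) := div_pos hm0 (by linarith)
  have hEr : (insert A1 Q).erase A1 = Q := Finset.erase_insert hQA1
  have hIns : insert A1 (P.erase A1) = P := Finset.insert_erase hA1P
  have hcardE : ((P.erase A1).card : ℝ) + 1 = (P.card : ℝ) := by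
    rw [show (P.card : ℕ) = (P.erase A1).card + 1 from (Finset.card_erase_add_one hA1P).symm]
    push_cast; ring
  intro N
  induction N with
  | zero =>
    intro t₀ E₀ p q hgap hbound hXP hXQ
    have hb : |p - q| ≤ m := by simpa using hbound
    obtain ⟨E', h1, h2, ξ, h3⟩ := finalmerge r x0 a w hw U m hmr t₀ E₀ P Q hPQ p q hb hXP hXQ
    exact ⟨1, one_pos, by omega, E', h1, h2, ξ, h3⟩
  | succ N ih =>
    intro t₀ E₀ p q hgap hbound hXP hXQ
    by_cases hc : |p - q| ≤ m
    · obtain ⟨E', h1, h2, ξ, h3⟩ := finalmerge r x0 a w hw U m hmr t₀ E₀ P Q hPQ p q hc hXP hXQ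
      exact ⟨1, one_pos, by omega, E', h1, h2, ξ, h3⟩
    push_neg at hc
    obtain ⟨cA, hcA0, hcA, E₁, q₁, hpre1, hwin1, hgap1, hkeep1, hmerge1⟩ :=
      halfround r x0 a w hw U A1 hA1U m δ hm0 hδr hmr Tn hTn t₀ E₀ P Q hPQ hdisj hA1P hQ
        p q hgap hc hXP hXQ
    by_cases hc1 : |q₁ - p| ≤ m
    · obtain ⟨E₂, h1, h2, ξ, h3⟩ := finalmerge r x0 a w hw U m hmr (t₀ + cA) E₁
        (insert A1 Q) (P.erase A1) hUnion2 q₁ p hc1 hmerge1 hkeep1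
      refine ⟨cA + 1, by omega, ?_, E₂, ?_, ?_, ξ, ?_⟩
      · have h2N : 2 * (N + 1) * (Tn + 1) = 2 * N * (Tn + 1) + 2 * (Tn + 1) := by ring
        omega
      · intro s hs; rw [h1 s (by omega), hpre1 s hs]
      · intro s hs1 hs2
        by_cases h : s < t₀ + cA
        · rw [h1 s h]; exact hwin1 s hs1 h
        · exact h2 s (by omega) (by omega)
      · rw [show t₀ + (cA + 1) = (t₀ + cA) + 1 by ring]; exact h3
    push_neg at hc1
    by_cases hPe : P.erase A1 = ∅
    · have hU : insert A1 Q = U := by rw [← hUnion2, hPe, Finset.union_empty]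
      refine ⟨cA, hcA0, ?_, E₁, hpre1, hwin1, a + q₁ • w, ?_⟩
      · have h2N : 2 * (N + 1) * (Tn + 1) = 2 * N * (Tn + 1) + 2 * (Tn + 1) := by ring
        omega
      · intro i hi; exact hmerge1 i (hU ▸ hi)
    have hQe : (P.erase A1).Nonempty := Finset.nonempty_iff_ne_empty.mpr hPe
    have hgapq₁ : |q₁ - p| ≤ δ := by
      rw [abs_sub_comm]; linarith [hgap1, hpos1]
    obtain ⟨cB, hcB0, hcB, E₂, q₂, hpre2, hwin2, hgap2, hkeep2, hmerge2⟩ :=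
      halfround r x0 a w hw U A1 hA1U m δ hm0 hδr hmr Tn hTn (t₀ + cA) E₁
        (insert A1 Q) (P.erase A1) hUnion2 hdisj2 (Finset.mem_insert_self A1 Q) hQe
        q₁ p hgapq₁ hc1 hmerge1 hkeep1
    -- set up the IH at time t₀ + cA + cB with P at q₂, Q at q₁
    have hXP' : ∀ i ∈ P, traj r E₂ x0 (t₀ + cA + cB) i = a + q₂ • w := by
      intro i hi
      exact hmerge2 i (by rw [hIns]; exact hi)
    have hXQ' : ∀ i ∈ Q, traj r E₂ x0 (t₀ + cA + cB) i = a + q₁ • w := by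
      intro i hi
      exact hkeep2 i (by rw [hEr]; exact hi)
    have hgap2' : |q₂ - q₁| ≤ |q₁ - p| - m / (2 * (P.card : ℝ)) := by
      rw [abs_sub_comm]
      calc |q₁ - q₂| ≤ |q₁ - p| - m / (2 * (((P.erase A1).card : ℝ) + 1)) := hgap2
        _ = |q₁ - p| - m / (2 * (P.card : ℝ)) := by rw [hcardE]
    have hgapN : |q₂ - q₁| ≤ m + N * (m / (2 * ((Q.card : ℝ) + 1)) + m / (2 * (P.card : ℝ))) := by
      have hb : |p - q| ≤ m + (N + 1) * (m / (2 * ((Q.card : ℝ) + 1)) + m / (2 * (P.card : ℝ)))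
          := by push_cast at hbound ⊢; linarith
      have e1 : |q₁ - p| ≤ |p - q| - m / (2 * ((Q.card : ℝ) + 1)) := by
        rw [abs_sub_comm]; exact hgap1
      nlinarith [e1, hgap2', hb]
    have hgapδ : |q₂ - q₁| ≤ δ := by linarith [hgap2', hgapq₁, hpos2]
    obtain ⟨ts, hts0, htsle, E₃, hpre3, hwin3, ξ, h3⟩ :=
      ih (t₀ + cA + cB) E₂ q₂ q₁ hgapδ hgapN hXP' hXQ'
    refine ⟨cA + cB + ts, by omega, ?_, E₃, ?_, ?_, ξ, ?_⟩
    · have h2N : 2 * (N + 1) * (Tn + 1) = 2 * N * (Tn + 1) + 2 * (Tn + 1) := by ring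
      omega
    · intro s hs
      rw [hpre3 s (by omega), hpre2 s (by omega), hpre1 s hs]
    · intro s hs1 hs2
      by_cases h : s < t₀ + cA
      · rw [hpre3 s (by omega), hpre2 s (by omega)]
        exact hwin1 s hs1 h
      · by_cases h' : s < t₀ + cA + cB
        · rw [hpre3 s (by omega)]
          exact hwin2 s (by omega) (by omega)
        · exact hwin3 s (by omega) (by omega)
    · rw [show t₀ + (cA + cB + ts) = (t₀ + cA + cB) + ts by ring]
      exact h3
end Rounds

lemma hgeq_aux (δ m a b : ℝ) (hm0 : 0 < m) (ha : 0 < a) (hb : 0 < b) :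
    2 * ((δ - m) / (m / (2 * (b + 1)) + m / (2 * a))) =
      (δ / m - 1) * (4 * a * (b + 1) / (a + b + 1)) + 2 - 2 := by
  field_simp
  ring

set_option maxHeartbeats 1000000 in
/-- In the CIBC system, two clusters with a connection can be merged
into a single cluster within `S(T+1)+1` steps by a suitable choice of control edge sets
drawn from `A_{α,β}`. -/
theorem cibc_merge_two_clusters
    {n d : ℕ} (hn : 3 ≤ n) (hd : 1 ≤ d)
    (r : Fin n → ℝ) (hrpos : ∀ i, 0 < r i)
    (hrmono : ∀ i j : Fin n, i ≤ j → r j ≤ r i)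
    (x0 : Fin n → EuclideanSpace ℝ (Fin d))
    (E : ℕ → Finset (Fin n × Fin n)) (t : ℕ)
    (Cα Cβ : Finset (Fin n)) (hCα : Cα.Nonempty) (hCβ : Cβ.Nonempty)
    -- all agents of `Cα` share one opinion, all agents of `Cβ` share another opinion
    (hαshare : ∀ i ∈ Cα, traj r E x0 t i = traj r E x0 t (Cα.min' hCα))
    (hβshare : ∀ i ∈ Cβ, traj r E x0 t i = traj r E x0 t (Cβ.min' hCβ))
    (hdiff : traj r E x0 t (Cα.min' hCα) ≠ traj r E x0 t (Cβ.min' hCβ))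
    -- `α₁ < β₁`
    (hord : Cα.min' hCα < Cβ.min' hCβ)
    -- the two clusters have a connection
    (hconn : ‖traj r E x0 t (Cα.min' hCα) - traj r E x0 t (Cβ.min' hCβ)‖ ≤
      (Cα ∪ Cβ).sup' (hCα.inl) r)
    (S T : ℤ)
    (hS : S = max
      ⌈(‖traj r E x0 t (Cα.min' hCα) - traj r E x0 t (Cβ.min' hCβ)‖ /
          min (r (Cα.max' hCα)) (r (Cβ.max' hCβ)) - 1) *
        (4 * (Cα.card : ℝ) * ((Cβ.card : ℝ) + 1) / ((Cα.card : ℝ) + (Cβ.card : ℝ) + 1))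
        + 2⌉ 0)
    (hT : T = max
      ⌈Real.logb 2 (‖traj r E x0 t (Cα.min' hCα) - traj r E x0 t (Cβ.min' hCβ)‖ /
          min (r (Cα.max' hCα)) (r (Cβ.max' hCβ)))⌉ 0) :
    ∃ tstar : ℕ, 0 < tstar ∧ (tstar : ℤ) ≤ S * (T + 1) + 1 ∧
      ∃ E' : ℕ → Finset (Fin n × Fin n),
        (∀ s, s < t → E' s = E s) ∧
        (∀ s, t ≤ s → s < t + tstar → E' s ⊆ (Cα ∪ Cβ).offDiag) ∧
        ∀ i ∈ Cα ∪ Cβ, ∀ j ∈ Cα ∪ Cβ,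
          traj r E' x0 (t + tstar) i = traj r E' x0 (t + tstar) j := by
  classical
  set A1 : Fin n := Cα.min' hCα with hA1
  set B1 : Fin n := Cβ.min' hCβ with hB1
  set a : EuclideanSpace ℝ (Fin d) := traj r E x0 t A1 with ha
  set b : EuclideanSpace ℝ (Fin d) := traj r E x0 t B1 with hb
  have hv : b - a ≠ 0 := sub_ne_zero.mpr (Ne.symm hdiff)
  set δ : ℝ := ‖b - a‖ with hδ
  have hδ0 : 0 < δ := norm_pos_iff.mpr hv
  set w : EuclideanSpace ℝ (Fin d) := ‖b - a‖⁻¹ • (b - a) with hwdef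
  have hw : ‖w‖ = 1 := norm_smul_inv_norm hv
  set U : Finset (Fin n) := Cα ∪ Cβ with hU
  have hA1α : A1 ∈ Cα := Cα.min'_mem hCα
  have hB1β : B1 ∈ Cβ := Cβ.min'_mem hCβ
  have hA1U : A1 ∈ U := Finset.mem_union_left _ hA1α
  set m : ℝ := min (r (Cα.max' hCα)) (r (Cβ.max' hCβ)) with hm
  have hm0 : 0 < m := lt_min (hrpos _) (hrpos _)
  have hmr : ∀ i ∈ U, m ≤ r i := by
    intro i hi
    rcases Finset.mem_union.mp hi with h | h
    · exact le_trans (min_le_left _ _) (hrmono i (Cα.max' hCα) (Cα.le_max' i h))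
    · exact le_trans (min_le_right _ _) (hrmono i (Cβ.max' hCβ) (Cβ.le_max' i h))
  have hnorm_eq : ‖traj r E x0 t A1 - traj r E x0 t B1‖ = δ := by
    rw [hδ, ← ha, ← hb, norm_sub_rev]
  have hδr : δ ≤ r A1 := by
    have h1 : ∀ i ∈ U, r i ≤ r A1 := by
      intro i hi
      rcases Finset.mem_union.mp hi with h | h
      · exact hrmono A1 i (Cα.min'_le i h)
      · exact hrmono A1 i (le_of_lt (lt_of_lt_of_le hord (Cβ.min'_le i h)))
    calc δ = ‖traj r E x0 t A1 - traj r E x0 t B1‖ := hnorm_eq.symm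
      _ ≤ U.sup' (hCα.inl) r := hconn
      _ ≤ r A1 := Finset.sup'_le _ _ h1
  have hdisjαβ : Disjoint Cα Cβ := by
    rw [Finset.disjoint_left]
    intro i hiα hiβ
    exact hdiff ((hαshare i hiα).symm.trans (hβshare i hiβ))
  have hXP : ∀ i ∈ Cα, traj r E x0 t i = a + (0:ℝ) • w := by
    intro i hi
    rw [zero_smul, add_zero]
    exact hαshare i hi
  have hXQ : ∀ i ∈ Cβ, traj r E x0 t i = a + δ • w := by
    intro i hi
    rw [hwdef, smul_smul, ← hδ, mul_inv_cancel₀ hδ0.ne', one_smul]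
    rw [show a + (b - a) = b by abel]
    exact hβshare i hi
  -- T and the halving count
  have hT0 : 0 ≤ T := hT ▸ le_max_right _ _
  set Tn : ℕ := T.toNat with hTn_def
  have hTcast : (Tn : ℤ) = T := Int.toNat_of_nonneg hT0
  have hρ0 : 0 < δ / m := div_pos hδ0 hm0
  have hTn : δ ≤ m * 2 ^ Tn := by
    have hlog : Real.logb 2 (δ / m) ≤ (Tn : ℝ) := by
      have h1 : (⌈Real.logb 2 (δ / m)⌉ : ℤ) ≤ T := by
        rw [hT, hnorm_eq]
        exact le_max_left _ _
      calc Real.logb 2 (δ / m) ≤ (⌈Real.logb 2 (δ / m)⌉ : ℝ) := Int.le_ceil _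
        _ ≤ ((T : ℤ) : ℝ) := by exact_mod_cast h1
        _ = (Tn : ℝ) := by rw [← hTcast]; push_cast; ring
    have h2 : δ / m ≤ (2:ℝ) ^ (Tn : ℝ) := by
      calc δ / m = (2:ℝ) ^ Real.logb 2 (δ / m) :=
            (Real.rpow_logb two_pos (by norm_num) hρ0).symm
        _ ≤ (2:ℝ) ^ (Tn : ℝ) :=
            Real.rpow_le_rpow_of_exponent_le (by norm_num) hlog
    rw [Real.rpow_natCast] at h2
    have := (div_le_iff₀ hm0).mp h2
    linarith
  -- the number of rounds
  have hCαR : (0:ℝ) < (Cα.card : ℝ) := by exact_mod_cast Finset.card_pos.mpr hCα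
  have hCβR : (0:ℝ) < (Cβ.card : ℝ) := by exact_mod_cast Finset.card_pos.mpr hCβ
  set g : ℝ := m / (2 * ((Cβ.card : ℝ) + 1)) + m / (2 * (Cα.card : ℝ)) with hg
  have hg0 : 0 < g := add_pos (div_pos hm0 (by linarith)) (div_pos hm0 (by linarith))
  set N : ℕ := ⌈(δ - m) / g⌉₊ with hN
  have hNg : δ - m ≤ N * g := by
    have := Nat.le_ceil ((δ - m) / g)
    calc δ - m = ((δ - m) / g) * g := by field_simp
      _ ≤ (N : ℝ) * g := mul_le_mul_of_nonneg_right this hg0.le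
  have hgap0 : |(0:ℝ) - δ| = δ := by
    rw [zero_sub, abs_neg, abs_of_pos hδ0]
  obtain ⟨tstar, hts0, htsle, E', hpre, hwin, ξ, hfin⟩ :=
    rounds r x0 a w hw U A1 hA1U m δ hm0 hδr hmr Tn hTn Cα Cβ hU.symm hdisjαβ hA1α hCβ
      N t E 0 δ (le_of_eq hgap0) (by rw [hgap0, ← hg]; linarith [hNg]) hXP hXQ
  -- the step-count bound
  have h2NS : (2 * N : ℤ) ≤ S := by
    by_cases hδm : δ ≤ m
    · have hN0 : N = 0 := by
        rw [hN, Nat.ceil_eq_zero]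
        exact div_nonpos_of_nonpos_of_nonneg (by linarith) hg0.le
      rw [hN0]
      simp only [Nat.cast_zero, mul_zero]
      exact hS ▸ le_max_right _ _
    · push_neg at hδm
      set y : ℝ := (δ / m - 1) *
        (4 * (Cα.card : ℝ) * ((Cβ.card : ℝ) + 1) / ((Cα.card : ℝ) + (Cβ.card : ℝ) + 1)) + 2
        with hy
      have hSy : y ≤ (S : ℝ) := by
        have h1 : (⌈y⌉ : ℤ) ≤ S := by
          rw [hS, hnorm_eq]
          exact le_max_left _ _
        calc y ≤ (⌈y⌉ : ℝ) := Int.le_ceil _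
          _ ≤ ((S : ℤ) : ℝ) := by exact_mod_cast h1
      have hgeq : 2 * ((δ - m) / g) = y - 2 := by
        rw [hy, hg]
        have hsum : (Cα.card : ℝ) + (Cβ.card : ℝ) + 1 ≠ 0 := by linarith
        exact hgeq_aux δ m _ _ hm0 hCαR hCβR
      have hNlt : (N : ℝ) < (δ - m) / g + 1 :=
        Nat.ceil_lt_add_one (div_nonneg (by linarith) hg0.le)
      clear_value N g y
      have : ((2 * N : ℤ) : ℝ) < (S : ℝ) := by
        push_cast
        linarith [hNlt, hSy, hgeq]
      exact_mod_cast this.le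
  refine ⟨tstar, hts0, ?_, E', hpre, hwin, fun i hi j hj => by rw [hfin i hi, hfin j hj]⟩
  have h1 : (tstar : ℤ) ≤ (2 * N : ℤ) * ((Tn : ℤ) + 1) + 1 := by
    have := htsle
    push_cast
    exact_mod_cast Nat.cast_le.mpr (by omega : tstar ≤ 2 * N * (Tn + 1) + 1)
  have h2 : (2 * N : ℤ) * ((Tn : ℤ) + 1) ≤ S * (T + 1) := by
    rw [hTcast]
    exact mul_le_mul_of_nonneg_right h2NS (by linarith)
  rw [hTcast] at h1
  linarith
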